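/- Let θ>0, γ>0, β>2 and let n be a natural number with 4n ≤ β. Then for every x>0 the function F̃_n(x) = x^{1−γ/2}(γx+β)^{(γ+β)/2} (dⁿ/dxⁿ)[2ⁿ x^{γ/2+n−1}(γx+β)^{n−(γ+β)/2}] satisfies the eigenfunction identity (2θ/(γ(β−2))) x(γx+β) F̃_n''(x) − θ(x − β/(β−2)) F̃_n'(x) = −λ_n F̃_n(x), where λ_n = θ n(β−2n)/(β−2). -/

import Mathlib

/-!
Write `F̃_n = φ · u⁽ⁿ⁾` with `φ(x) = x^(1-γ/2) (γx+β)^((γ+β)/2)` and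
`u(x) = 2ⁿ x^(γ/2+n-1) (γx+β)^(n-(γ+β)/2)`. The weight `u` satisfies the Pearson equation
`x(γx+β) u' = q u` with `q` linear, and differentiating it `n + 1` times gives a second-order
linear ODE for `u⁽ⁿ⁾`. Expressing `F̃_n'` and `F̃_n''` through the logarithmic derivative
`ρ = φ'/φ` and eliminating `u⁽ⁿ⁺²⁾` with that ODE reduces the eigenvalue equation to an
identity between rational functions of `x`.
-/

open Real Set Filter Topology

theorem ContDiffOn.hasDerivAt_iteratedDeriv {f : ℝ → ℝ} {s : Set ℝ}
    (hf : ContDiffOn ℝ ⊤ f s) (hs : IsOpen s) (m : ℕ) {y : ℝ} (hy : y ∈ s) :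
    HasDerivAt (iteratedDeriv m f) (iteratedDeriv (m + 1) f y) y := by
  rw [iteratedDeriv_succ]
  refine DifferentiableAt.hasDerivAt ?_
  have hdiff := hf.differentiableOn_iteratedDerivWithin (m := m) (by simp) hs.uniqueDiffOn y hy
  exact (hdiff.differentiableAt (hs.mem_nhds hy)).congr_of_eventuallyEq
    ((iteratedDerivWithin_of_isOpen hs).eventuallyEq_of_mem (hs.mem_nhds hy)).symm

theorem HasDerivAt.eq_zero_of_eqOn_zero {G : ℝ → ℝ} {G' y : ℝ} {s : Set ℝ}
    (h : HasDerivAt G G' y) (hs : IsOpen s) (hy : y ∈ s) (hG : EqOn G 0 s) : G' = 0 :=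
  h.unique <| (hasDerivAt_const y 0).congr_of_eventuallyEq <|
    hG.eventuallyEq_of_mem (hs.mem_nhds hy)

theorem quadratic_relation_deriv {A B C D E : ℝ} {s : Set ℝ} {g g' g'' k k' : ℝ → ℝ}
    (hs : IsOpen s) (hg : ∀ y ∈ s, HasDerivAt g (g' y) y)
    (hg' : ∀ y ∈ s, HasDerivAt g' (g'' y) y) (hk : ∀ y ∈ s, HasDerivAt k (k' y) y)
    (h : ∀ y ∈ s, (A * y ^ 2 + B * y + C) * g' y + (D * y + E) * g y + k y = 0) :
    ∀ y ∈ s, (A * y ^ 2 + B * y + C) * g'' y + ((2 * A + D) * y + (B + E)) * g' y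
      + D * g y + k' y = 0 := by
  intro y hy
  have hp : HasDerivAt (fun y => A * y ^ 2 + B * y + C) (2 * A * y + B) y := by
    have := (((hasDerivAt_pow 2 y).const_mul A).add ((hasDerivAt_id y).const_mul B)).add_const C
    exact this.congr_deriv (by simp only [Nat.cast_ofNat, Nat.add_one_sub_one, pow_one]; ring)
  have hq : HasDerivAt (fun y => D * y + E) D y := by
    simpa using ((hasDerivAt_id y).const_mul D).add_const E
  have hderiv := ((hp.mul (hg' y hy)).add (hq.mul (hg y hy))).add (hk y hy)
  linear_combination hderiv.eq_zero_of_eqOn_zero hs hy h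

theorem iteratedDeriv_pearson {A B C D E : ℝ} {s : Set ℝ} {f : ℝ → ℝ} (hs : IsOpen s)
    (hf : ContDiffOn ℝ ⊤ f s)
    (hP : ∀ y ∈ s, (A * y ^ 2 + B * y + C) * deriv f y = (D * y + E) * f y) (m : ℕ) :
    ∀ y ∈ s, (A * y ^ 2 + B * y + C) * iteratedDeriv (m + 2) f y
      + ((m + 1) * (2 * A * y + B) - (D * y + E)) * iteratedDeriv (m + 1) f y
      + (m + 1) * (m * A - D) * iteratedDeriv m f y = 0 := by
  have hd := fun m y (hy : y ∈ s) => hf.hasDerivAt_iteratedDeriv hs m hy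
  induction m with
  | zero =>
    have := quadratic_relation_deriv (A := A) (B := B) (C := C) (D := -D) (E := -E) (k := 0)
      (k' := 0) hs (hd 0) (hd 1) (fun y _ => hasDerivAt_const y 0)
      fun y hy => by
        simp only [zero_add, iteratedDeriv_one, iteratedDeriv_zero, Pi.zero_apply]
        linear_combination hP y hy
    intro y hy
    simp only [zero_add, iteratedDeriv_zero, Pi.zero_apply, CharP.cast_eq_zero] at this ⊢
    linear_combination this y hy
  | succ m ih =>
    have := quadratic_relation_deriv (A := A) (B := B) (C := C) (D := (m + 1) * (2 * A) - D)
      (E := (m + 1) * B - E) hs (hd (m + 1)) (hd (m + 2))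
      (fun y hy => (hd m y hy).const_mul ((m + 1) * (m * A - D)))
      fun y hy => by linear_combination ih y hy
    intro y hy
    push_cast
    linear_combination this y hy

theorem hasDerivAt_mul_of_hasDerivAt_eq_mul {φ v : ℝ → ℝ} {r v' y : ℝ}
    (hφ : HasDerivAt φ (r * φ y) y) (hv : HasDerivAt v v' y) :
    HasDerivAt (fun y => φ y * v y) (φ y * (v' + r * v y)) y :=
  (hφ.mul hv).congr_deriv (by ring)

theorem deriv_deriv_mul_of_hasDerivAt_eq_mul {φ ρ ρ' v v' v'' : ℝ → ℝ} {s : Set ℝ}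
    {y : ℝ} (hs : IsOpen s) (hφ : ∀ y ∈ s, HasDerivAt φ (ρ y * φ y) y)
    (hρ : ∀ y ∈ s, HasDerivAt ρ (ρ' y) y) (hv : ∀ y ∈ s, HasDerivAt v (v' y) y)
    (hv' : ∀ y ∈ s, HasDerivAt v' (v'' y) y) (hy : y ∈ s) :
    deriv (deriv fun y => φ y * v y) y
      = φ y * (v'' y + 2 * ρ y * v' y + (ρ' y + ρ y ^ 2) * v y) := by
  have hderiv : deriv (fun y => φ y * v y) =ᶠ[𝓝 y] fun y => φ y * (v' y + ρ y * v y) :=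
    eventually_of_mem (hs.mem_nhds hy) fun y hy =>
      (hasDerivAt_mul_of_hasDerivAt_eq_mul (hφ y hy) (hv y hy)).deriv
  rw [hderiv.deriv_eq]
  exact (hasDerivAt_mul_of_hasDerivAt_eq_mul (hφ y hy)
    ((hv' y hy).add ((hρ y hy).mul (hv y hy)))).deriv.trans
    (by simp only [Pi.add_apply, Pi.mul_apply]; ring)

section RpowMulRpow

variable {γ β y : ℝ}

theorem hasDerivAt_rpow_mul_rpow (a b : ℝ) (hy : 0 < y) (hw : 0 < γ * y + β) :
    HasDerivAt (fun y => y ^ a * (γ * y + β) ^ b)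
      ((a / y + b * γ / (γ * y + β)) * (y ^ a * (γ * y + β) ^ b)) y := by
  have hlin : HasDerivAt (fun y => γ * y + β) γ y := by
    simpa using ((hasDerivAt_id y).const_mul γ).add_const β
  refine ((hasDerivAt_rpow_const (p := a) (Or.inl hy.ne')).mul
    (hlin.rpow_const (p := b) (Or.inl hw.ne'))).congr_deriv ?_
  rw [rpow_sub_one hy.ne', rpow_sub_one hw.ne']
  ring

theorem hasDerivAt_div_add_div (a b : ℝ) (hy : y ≠ 0) (hw : γ * y + β ≠ 0) :
    HasDerivAt (fun y => a / y + b * γ / (γ * y + β))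
      (-(a / y ^ 2) - b * γ ^ 2 / (γ * y + β) ^ 2) y := by
  have hlin : HasDerivAt (fun y => γ * y + β) γ y := by
    simpa using ((hasDerivAt_id y).const_mul γ).add_const β
  refine (((hasDerivAt_const y a).div (hasDerivAt_id y) hy).add
    ((hasDerivAt_const y (b * γ)).div hlin hw)).congr_deriv ?_
  simp only [id]
  field_simp
  ring

theorem pearson_const_mul_rpow_mul_rpow (K a b : ℝ) (hy : 0 < y) (hw : 0 < γ * y + β) :
    y * (γ * y + β) * deriv (fun y => K * y ^ a * (γ * y + β) ^ b) y
      = ((a + b) * γ * y + a * β) * (K * y ^ a * (γ * y + β) ^ b) := by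
  have h := (hasDerivAt_rpow_mul_rpow a b hy hw).const_mul K
  simp only [← mul_assoc] at h
  have hlog : y * (γ * y + β) * (a / y + b * γ / (γ * y + β)) = (a + b) * γ * y + a * β := by
    rw [div_add_div _ _ hy.ne' hw.ne', mul_div_cancel₀ _ (mul_ne_zero hy.ne' hw.ne')]
    ring
  rw [h.deriv]
  linear_combination (K * y ^ a * (γ * y + β) ^ b) * hlog

theorem contDiffOn_const_mul_rpow_mul_rpow (K a b : ℝ)
    (hw : ∀ y ∈ Ioi (0 : ℝ), γ * y + β ≠ 0) :
    ContDiffOn ℝ ⊤ (fun y => K * y ^ a * (γ * y + β) ^ b) (Ioi 0) := by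
  have hpow : ContDiffOn ℝ ⊤ (fun y : ℝ => y ^ a) (Ioi 0) := fun y hy =>
    (contDiffAt_rpow_const_of_ne (ne_of_gt hy)).contDiffWithinAt
  have hlin : ContDiffOn ℝ ⊤ (fun y : ℝ => (γ * y + β) ^ b) (Ioi 0) :=
    ((contDiff_const.mul contDiff_id).add contDiff_const).contDiffOn.rpow_const_of_ne hw
  exact (contDiffOn_const.mul hpow).mul hlin

end RpowMulRpow

theorem fs_polynomial_eigenfunction_general (θ γ β : ℝ) (n : ℕ)
    (hγ : 0 < γ) (hβ : 2 < β)
    (F : ℝ → ℝ)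
    (hF : F = fun x : ℝ => x ^ (1 - γ / 2) * (γ * x + β) ^ (γ / 2 + β / 2) *
      iteratedDeriv n
        (fun y : ℝ => 2 ^ n * y ^ (γ / 2 + (n : ℝ) - 1) *
          (γ * y + β) ^ ((n : ℝ) - γ / 2 - β / 2)) x) :
    ∀ x : ℝ, 0 < x →
      (2 * θ / (γ * (β - 2))) * (x * (γ * x + β)) * deriv (deriv F) x
          - θ * (x - β / (β - 2)) * deriv F x
        = -(θ * n * (β - 2 * n) / (β - 2)) * F x := by
  subst hF
  intro x hx
  have hw : ∀ y ∈ Ioi (0 : ℝ), 0 < γ * y + β := fun y (hy : 0 < y) => by positivity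
  set c : ℝ := γ / 2 + n - 1
  set d : ℝ := n - γ / 2 - β / 2
  have hu := contDiffOn_const_mul_rpow_mul_rpow (2 ^ n) c d fun y hy => (hw y hy).ne'
  have hd := fun m y (hy : y ∈ Ioi (0 : ℝ)) => hu.hasDerivAt_iteratedDeriv isOpen_Ioi m hy
  have hode := iteratedDeriv_pearson (A := γ) (B := β) (C := 0) (D := (c + d) * γ) (E := c * β)
    isOpen_Ioi hu
    (fun y hy => by linear_combination pearson_const_mul_rpow_mul_rpow (2 ^ n) c d hy (hw y hy))
    n x hx
  have hφ := fun y (hy : y ∈ Ioi (0 : ℝ)) =>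
    hasDerivAt_rpow_mul_rpow (1 - γ / 2) (γ / 2 + β / 2) hy (hw y hy)
  rw [deriv_deriv_mul_of_hasDerivAt_eq_mul isOpen_Ioi hφ
      (fun y hy => hasDerivAt_div_add_div _ _ (ne_of_gt hy) (hw y hy).ne') (hd n) (hd (n + 1)) hx,
    (hasDerivAt_mul_of_hasDerivAt_eq_mul (hφ x hx) (hd n x hx)).deriv]
  have hβ2 : β - 2 ≠ 0 := by linarith
  linear_combination (norm := skip)
    (2 * θ / (γ * (β - 2))) * (x ^ (1 - γ / 2) * (γ * x + β) ^ (γ / 2 + β / 2)) * hode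
  field_simp
  ring

/-- The Fisher–Snedecor function `F̃_n` given by the Rodrigues formula is an
eigenfunction of the generator of the Fisher–Snedecor diffusion with eigenvalue
`λ_n = θ n (β - 2n) / (β - 2)`. -/
theorem fs_polynomial_eigenfunction (θ γ β : ℝ) (n : ℕ)
    (hθ : 0 < θ) (hγ : 0 < γ) (hβ : 2 < β) (hn : (4 * n : ℝ) ≤ β)
    (F : ℝ → ℝ)
    (hF : F = fun x : ℝ => x ^ (1 - γ / 2) * (γ * x + β) ^ (γ / 2 + β / 2) *
      iteratedDeriv n
        (fun y : ℝ => 2 ^ n * y ^ (γ / 2 + (n : ℝ) - 1) *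
          (γ * y + β) ^ ((n : ℝ) - γ / 2 - β / 2)) x) :
    ∀ x : ℝ, 0 < x →
      (2 * θ / (γ * (β - 2))) * (x * (γ * x + β)) * deriv (deriv F) x
          - θ * (x - β / (β - 2)) * deriv F x
        = -(θ * n * (β - 2 * n) / (β - 2)) * F x :=
  fs_polynomial_eigenfunction_general θ γ β n hγ hβ F hF
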